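/- Let Δ be a finite abstract simplicial complex, v a vertex of Δ, and p ≥ 1. Then the p-degree centrality of v satisfies c_v^{D^p} ≤ (Σ_{j=1}^{p+1} C(n+1, j)) − 1, where n = deg_U^{(0,1)}(v) is the number of vertices w ≠ v such that {v,w} is a 1-simplex of Δ, and C(·,·) denotes the binomial coefficient. -/

import Mathlib

/-- For a vertex `v` of a finite abstract simplicial complex `Δ` and `p ≥ 1`,
the `p`-degree centrality of `v` (the number of nonempty simplices of `Δ`, distinct from
`{v}`, that are `p`-upper adjacent to `{v}`) is at most
`(Σ_{j=1}^{p+1} C(n+1, j)) − 1`, where `n = deg_U^{(0,1)}(v)` is the number of vertices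
`w ≠ v` such that `{v, w}` is a 1-simplex of `Δ`. -/
theorem p_degree_centrality_le_binomial_bound
    {V : Type*} [Fintype V] [DecidableEq V]
    (Δ : Finset (Finset V))
    (hΔ : ∀ σ ∈ Δ, ∀ τ ⊆ σ, τ ∈ Δ)
    (v : V) (hv : ({v} : Finset V) ∈ Δ)
    (p : ℕ) (hp : 1 ≤ p)
    (n : ℕ) (hn : n = Set.ncard {w : V | w ≠ v ∧ ({v, w} : Finset V) ∈ Δ}) :
    Set.ncard {σ : Finset V | σ ∈ Δ ∧ σ.Nonempty ∧ σ ≠ ({v} : Finset V) ∧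
        ∃ τ ∈ Δ, τ.card = p + 1 ∧ ({v} : Finset V) ⊆ τ ∧ σ ⊆ τ}
      ≤ (∑ j ∈ Finset.Icc 1 (p + 1), Nat.choose (n + 1) j) - 1 := by
  classical
  set N : Finset V := Finset.univ.filter (fun w => w ≠ v ∧ ({v, w} : Finset V) ∈ Δ) with hN
  have hncard : n = N.card := by
    rw [hn]
    have : {w : V | w ≠ v ∧ ({v, w} : Finset V) ∈ Δ} = ↑N := by
      ext w; simp [hN]
    rw [this, Set.ncard_coe_finset]
  set S : Finset V := insert v N with hS
  have hvS : v ∈ S := Finset.mem_insert_self v N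
  have hScard : S.card = n + 1 := by
    rw [hS, Finset.card_insert_of_notMem, hncard]
    simp [hN]
  set A : Finset (Finset V) :=
    (Finset.Icc 1 (p + 1)).biUnion (fun j => S.powersetCard j) with hA
  have hAcard : A.card = ∑ j ∈ Finset.Icc 1 (p + 1), Nat.choose (n + 1) j := by
    rw [hA, Finset.card_biUnion]
    · refine Finset.sum_congr rfl fun j _ => ?_
      rw [Finset.card_powersetCard, hScard]
    · intro i _ j _ hij
      simp only [Finset.disjoint_left, Finset.mem_powersetCard]
      rintro σ ⟨-, h1⟩ ⟨-, h2⟩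
      exact hij (h1 ▸ h2 ▸ rfl)
  have hvA : ({v} : Finset V) ∈ A := by
    rw [hA]
    refine Finset.mem_biUnion.2 ⟨1, ?_, ?_⟩
    · simp only [Finset.mem_Icc]
      omega
    · simp [Finset.mem_powersetCard, hvS]
  -- the target set is contained in A.erase {v}
  have hsub : {σ : Finset V | σ ∈ Δ ∧ σ.Nonempty ∧ σ ≠ ({v} : Finset V) ∧
      ∃ τ ∈ Δ, τ.card = p + 1 ∧ ({v} : Finset V) ⊆ τ ∧ σ ⊆ τ}
      ⊆ ↑(A.erase {v}) := by
    rintro σ ⟨hσΔ, hσne, hσv, τ, hτΔ, hτcard, hvτ, hστ⟩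
    simp only [Finset.coe_erase, Set.mem_diff, Finset.mem_coe, Set.mem_singleton_iff]
    refine ⟨?_, hσv⟩
    rw [hA]
    refine Finset.mem_biUnion.2 ⟨σ.card, ?_, ?_⟩
    · rw [Finset.mem_Icc]
      constructor
      · exact Finset.card_pos.2 hσne
      · rw [← hτcard]; exact Finset.card_le_card hστ
    · rw [Finset.mem_powersetCard]
      refine ⟨?_, rfl⟩
      intro x hxσ
      have hxτ : x ∈ τ := hστ hxσ
      by_cases hxv : x = v
      · rw [hxv]; exact hvS
      · rw [hS]
        refine Finset.mem_insert_of_mem ?_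
        simp only [hN, Finset.mem_filter, Finset.mem_univ, true_and]
        refine ⟨hxv, hΔ τ hτΔ _ ?_⟩
        intro y hy
        rcases Finset.mem_insert.1 hy with h | h
        · rw [h]; exact hvτ (Finset.mem_singleton_self v)
        · rw [Finset.mem_singleton.1 h]; exact hxτ
  calc Set.ncard {σ : Finset V | σ ∈ Δ ∧ σ.Nonempty ∧ σ ≠ ({v} : Finset V) ∧
        ∃ τ ∈ Δ, τ.card = p + 1 ∧ ({v} : Finset V) ⊆ τ ∧ σ ⊆ τ}
      ≤ Set.ncard ↑(A.erase {v}) := Set.ncard_le_ncard hsub (Finset.finite_toSet _)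
    _ = (A.erase {v}).card := Set.ncard_coe_finset _
    _ = A.card - 1 := Finset.card_erase_of_mem hvA
    _ = (∑ j ∈ Finset.Icc 1 (p + 1), Nat.choose (n + 1) j) - 1 := by rw [hAcard]
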